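/- arXiv:1304.3006 — 8 statements merged into one kernel-verified Lean document; each statement's English description precedes it below -/
import Mathlib

section
/- Let G be a topological group acting continuously on topological spaces E and X, and let f : E → X be a continuous G-equivariant map. If (U, ξ) is a G-local retraction around a point x ∈ X, then the map f⁻¹({x}) × U → f⁻¹(U) given by (z, y) ↦ ξ(y) • z is a homeomorphism (for the subspace topologies), and it satisfies f(ξ(y) • z) = y for all z ∈ f⁻¹({x}) and y ∈ U. In particular, a G-equivariant continuous map onto a G-locally retractile space is a locally trivial fibration. -/
/-- Let `G` act continuously on `E` and `X`, and let `f : E → X` be a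
continuous `G`-equivariant map.  If `(U, ξ)` is a `G`-local retraction around `x ∈ X`, then
`f (ξ y • z) = y` for all `z ∈ f ⁻¹' {x}` and `y ∈ U`, and the map
`f ⁻¹' {x} × U → f ⁻¹' U`, `(z, y) ↦ ξ y • z`, is a homeomorphism.  In particular a
`G`-equivariant continuous map onto a `G`-locally retractile space is a locally trivial
fibration. -/
theorem equivariant_map_local_retraction_trivialisation
    {G E X : Type*} [TopologicalSpace G] [Group G] [IsTopologicalGroup G]
    [TopologicalSpace E] [MulAction G E] [ContinuousSMul G E]
    [TopologicalSpace X] [MulAction G X] [ContinuousSMul G X]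
    (f : E → X) (hf : Continuous f)
    (hequiv : ∀ (γ : G) (e : E), f (γ • e) = γ • f e)
    (x : X) (U : Set X) (ξ : X → G)
    (hU : IsOpen U) (hxU : x ∈ U) (hξc : ContinuousOn ξ U)
    (hξ1 : ξ x = 1) (hξ : ∀ y ∈ U, ξ y • x = y) :
    (∀ z ∈ f ⁻¹' {x}, ∀ y ∈ U, f (ξ y • z) = y) ∧
    ∃ φ : (f ⁻¹' {x}) × U ≃ₜ (f ⁻¹' U),
      ∀ (z : f ⁻¹' {x}) (y : U), (φ (z, y) : E) = ξ (y : X) • (z : E) := by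
  have key : ∀ z ∈ f ⁻¹' {x}, ∀ y ∈ U, f (ξ y • z) = y := by
    intro z hz y hy
    have hz' : f z = x := hz
    rw [hequiv, hz', hξ y hy]
  refine ⟨key, ?_⟩
  have toMem : ∀ (p : (f ⁻¹' {x}) × U), ξ (p.2 : X) • (p.1 : E) ∈ f ⁻¹' U := by
    intro p
    have := key p.1 p.1.2 p.2 p.2.2
    simp only [Set.mem_preimage, this]
    exact p.2.2
  have inv1 : ∀ (e : f ⁻¹' U), (ξ (f (e : E)))⁻¹ • (e : E) ∈ f ⁻¹' {x} := by
    intro e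
    have heU : f (e : E) ∈ U := e.2
    have : ξ (f (e : E)) • x = f (e : E) := hξ _ heU
    simp only [Set.mem_preimage, Set.mem_singleton_iff, hequiv, inv_smul_eq_iff]
    exact this.symm
  have inv2 : ∀ (e : f ⁻¹' U), f (e : E) ∈ U := fun e => e.2
  refine ⟨⟨⟨fun p => ⟨ξ (p.2 : X) • (p.1 : E), toMem p⟩,
      fun e => (⟨(ξ (f (e : E)))⁻¹ • (e : E), inv1 e⟩, ⟨f (e : E), inv2 e⟩),
      ?_, ?_⟩, ?_, ?_⟩, fun z y => rfl⟩
  · rintro ⟨z, y⟩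
    have hfy : f (ξ (y : X) • (z : E)) = (y : X) := key z z.2 y y.2
    ext
    · simp [hfy, inv_smul_smul]
    · simp [hfy]
  · intro e
    have heU : f (e : E) ∈ U := e.2
    simp [smul_inv_smul]
  · -- continuity of forward map
    apply Continuous.subtype_mk
    have hξcont : Continuous fun (y : U) => ξ (y : X) := hξc.restrict
    exact (hξcont.comp continuous_snd).smul (continuous_subtype_val.comp continuous_fst)
  · -- continuity of inverse map
    have hfe : Continuous fun (e : f ⁻¹' U) => f (e : E) := hf.comp continuous_subtype_val
    have hξfe : Continuous fun (e : f ⁻¹' U) => ξ (f (e : E)) :=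
      hξc.comp_continuous hfe fun e => e.2
    exact Continuous.prodMk
      (Continuous.subtype_mk (hξfe.inv.smul continuous_subtype_val) _)
      (Continuous.subtype_mk hfe _)
end

section
/- Let G be a topological group acting continuously on topological spaces E and X, let f : E → X be a continuous G-equivariant map, and suppose X is G-locally retractile. Then f has the homotopy lifting property with respect to all cubes: for every n ≥ 0, every continuous map H : [0,1]ⁿ × [0,1] → X and every continuous map h : [0,1]ⁿ → E with f ∘ h = H(−, 0), there is a continuous map H̃ : [0,1]ⁿ × [0,1] → E with f ∘ H̃ = H and H̃(−, 0) = h; that is, f is a Serre fibration. -/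
open Set Metric

/-- Gluing a function continuous on each of two closed sets covering the space. -/
private lemma glue_closed {α β : Type*} [TopologicalSpace α] [TopologicalSpace β]
    {g : α → β} {s t : Set α} (hs : IsClosed s) (ht : IsClosed t)
    (hst : ∀ x, x ∈ s ∨ x ∈ t) (h1 : ContinuousOn g s) (h2 : ContinuousOn g t) :
    Continuous g := by
  have hlf : LocallyFinite (fun b : Bool => if b then s else t) :=
    locallyFinite_of_finite _
  refine hlf.continuous ?_ (fun b => by cases b <;> simpa) (fun b => by cases b <;> simpa)
  ext x
  simp only [Set.mem_iUnion, Set.mem_univ, iff_true]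
  rcases hst x with h | h
  exacts [⟨true, by simpa⟩, ⟨false, by simpa⟩]

/-- The core "staggered lifting" construction.  Given a partition of unity `φ` (indexed by
`l < m`) with closed carriers `T l`, a time grid of `k` equal steps, and for each
`(i, l)` a "local retraction-like" pair `(U i l, ξ i l)` valid on `H(T l × [i/k,(i+1)/k])`,
we build a lift of the homotopy `Hr` starting at `e0`. -/
private theorem aux_lift
    {G E X C : Type*} [TopologicalSpace G] [Group G] [IsTopologicalGroup G]
    [TopologicalSpace E] [MulAction G E] [ContinuousSMul G E]
    [TopologicalSpace X] [MulAction G X] [ContinuousSMul G X]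
    [TopologicalSpace C]
    (f : E → X) (hequiv : ∀ (γ : G) (e : E), f (γ • e) = γ • f e)
    (k m : ℕ) (hk : 0 < k) (hm : 0 < m)
    (φ : ℕ → C → ℝ) (hφc : ∀ l, Continuous (φ l)) (hφ0 : ∀ l c, 0 ≤ φ l c)
    (hφ1 : ∀ c, ∑ j ∈ Finset.range m, φ j c = 1)
    (T : ℕ → Set C) (hT : ∀ l, IsClosed (T l)) (hTφ : ∀ l c, c ∉ T l → φ l c = 0)
    (Hr : C × ℝ → X) (hHc : Continuous Hr)
    (U : ℕ → ℕ → Set X) (ξ : ℕ → ℕ → X → G)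
    (hξc : ∀ i l, ContinuousOn (ξ i l) (U i l))
    (hmem : ∀ i l, i < k → l < m → ∀ c ∈ T l, ∀ t : ℝ,
      (i : ℝ)/k ≤ t → t ≤ ((i : ℝ)+1)/k → Hr (c, t) ∈ U i l)
    (hret : ∀ i l, ∀ y ∈ U i l, ∀ y' ∈ U i l, (ξ i l y * (ξ i l y')⁻¹) • y' = y)
    (e0 : C → E) (he0c : Continuous e0) (he0 : ∀ c, f (e0 c) = Hr (c, 0)) :
    ∃ Hh : C × ℝ → E, Continuous Hh ∧
      (∀ c : C, ∀ t : ℝ, 0 ≤ t → t ≤ 1 → f (Hh (c, t)) = Hr (c, t)) ∧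
      (∀ c : C, ∀ t : ℝ, t ≤ 0 → Hh (c, t) = e0 c) := by
  classical
  have hkR : (0:ℝ) < (k:ℝ) := by exact_mod_cast hk
  -- the staggered time schedule
  let S : ℕ → C → ℝ := fun r c =>
    ((r / m : ℕ) : ℝ)/(k:ℝ) + (∑ j ∈ Finset.range (r % m), φ j c)/(k:ℝ)
  have hSdef : ∀ r c, S r c =
      ((r / m : ℕ) : ℝ)/(k:ℝ) + (∑ j ∈ Finset.range (r % m), φ j c)/(k:ℝ) :=
    fun _ _ => rfl
  have hScont : ∀ r, Continuous (S r) := fun r =>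
    continuous_const.add ((continuous_finset_sum _ fun j _ => hφc j).div_const _)
  have hPS0 : ∀ (r : ℕ) (c : C), 0 ≤ ∑ j ∈ Finset.range r, φ j c :=
    fun r c => Finset.sum_nonneg fun j _ => hφ0 j c
  have hPS1 : ∀ (r : ℕ) (c : C), r ≤ m → ∑ j ∈ Finset.range r, φ j c ≤ 1 := by
    intro r c hr
    rw [← hφ1 c]
    exact Finset.sum_le_sum_of_subset_of_nonneg (Finset.range_subset_range.2 hr)
      (fun j _ _ => hφ0 j c)
  have hS0 : ∀ c, S 0 c = 0 := fun c => by simp [hSdef]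
  have hSR : ∀ c, S (k*m) c = 1 := by
    intro c
    rw [hSdef, Nat.mul_div_cancel k hm, Nat.mul_mod_left]
    simp [div_self (ne_of_gt hkR)]
  have hSnn : ∀ r c, 0 ≤ S r c := fun r c => by
    rw [hSdef]
    exact add_nonneg (div_nonneg (Nat.cast_nonneg _) hkR.le)
      (div_nonneg (hPS0 _ c) hkR.le)
  have hSsucc : ∀ r c, r < k*m → S (r+1) c = S r c + φ (r % m) c / k := by
    intro r c hr
    rcases lt_or_eq_of_le (Nat.succ_le_of_lt (Nat.mod_lt r hm)) with h2 | h2 <;>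
      rw [Nat.succ_eq_add_one] at h2
    · have e1 : (r+1) % m = r % m + 1 := by
        conv_lhs => rw [← Nat.div_add_mod r m, Nat.add_assoc, Nat.mul_add_mod]
        exact Nat.mod_eq_of_lt h2
      have e2 : (r+1) / m = r / m := by
        conv_lhs => rw [← Nat.div_add_mod r m, Nat.add_assoc, Nat.mul_add_div hm]
        rw [Nat.div_eq_of_lt h2, Nat.add_zero]
      rw [hSdef, hSdef, e1, e2, Finset.sum_range_succ, add_div]
      ring
    · have e1 : (r+1) % m = 0 := by
        conv_lhs => rw [← Nat.div_add_mod r m, Nat.add_assoc, Nat.mul_add_mod, h2]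
        exact Nat.mod_self m
      have e2 : (r+1) / m = r / m + 1 := by
        conv_lhs => rw [← Nat.div_add_mod r m, Nat.add_assoc, Nat.mul_add_div hm, h2]
        rw [Nat.div_self hm]
      have h3 : ∑ j ∈ Finset.range (r % m), φ j c + φ (r % m) c = 1 := by
        rw [← Finset.sum_range_succ, h2, hφ1]
      have key : ((r/m : ℕ):ℝ)/(k:ℝ) + (∑ j ∈ Finset.range (r % m), φ j c)/(k:ℝ)
          + φ (r % m) c/(k:ℝ) = (((r/m : ℕ):ℝ) + 1)/(k:ℝ) := by
        rw [add_assoc, ← add_div, h3, add_div]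
      rw [hSdef, hSdef, e1, e2]
      rw [Finset.range_zero, Finset.sum_empty, zero_div, add_zero]
      push_cast
      linarith [key]
  have hSmono : ∀ r c, r < k*m → S r c ≤ S (r+1) c := by
    intro r c hr
    rw [hSsucc r c hr]
    linarith [div_nonneg (hφ0 (r % m) c) hkR.le]
  have hSub : ∀ r c, r < k*m →
      ((r/m : ℕ):ℝ)/k ≤ S r c ∧ S (r+1) c ≤ (((r/m : ℕ):ℝ)+1)/k := by
    intro r c hr
    constructor
    · rw [hSdef]
      exact le_add_of_nonneg_right (div_nonneg (hPS0 _ c) hkR.le)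
    · have h3 : ∑ j ∈ Finset.range (r % m), φ j c + φ (r % m) c ≤ 1 := by
        rw [← Finset.sum_range_succ]
        exact hPS1 _ c (Nat.succ_le_of_lt (Nat.mod_lt r hm))
      rw [hSsucc r c hr, hSdef, add_assoc, ← add_div,
        show (((r/m : ℕ):ℝ)+1)/(k:ℝ) = ((r/m : ℕ):ℝ)/k + 1/k from add_div _ _ _]
      refine add_le_add_right ?_ _
      gcongr
  have hmemb : ∀ r, r < k*m → ∀ c ∈ T (r % m), ∀ t : ℝ,
      S r c ≤ t → t ≤ S (r+1) c → Hr (c, t) ∈ U (r/m) (r%m) := by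
    intro r hr c hc t h1 h2
    have hik : r / m < k := Nat.div_lt_of_lt_mul (by linarith [Nat.mul_comm k m])
    exact hmem (r/m) (r%m) hik (Nat.mod_lt r hm) c hc t
      (le_trans (hSub r c hr).1 h1) (le_trans h2 (hSub r c hr).2)
  -- the clamped time and the group-valued increments
  let mid : ℕ → C × ℝ → ℝ := fun r p => max (S r p.1) (min p.2 (S (r+1) p.1))
  have hmiddef : ∀ r p, mid r p = max (S r p.1) (min p.2 (S (r+1) p.1)) := fun _ _ => rfl
  let gf : ℕ → C × ℝ → G := fun r p =>
    if p.1 ∈ T (r % m) then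
      ξ (r/m) (r%m) (Hr (p.1, mid r p)) * (ξ (r/m) (r%m) (Hr (p.1, S r p.1)))⁻¹
    else 1
  have hgfdef : ∀ r p, gf r p =
      (if p.1 ∈ T (r % m) then
        ξ (r/m) (r%m) (Hr (p.1, mid r p)) * (ξ (r/m) (r%m) (Hr (p.1, S r p.1)))⁻¹
      else 1) := fun _ _ => rfl
  -- the recursive lift
  let eh : ℕ → C × ℝ → E := fun r =>
    Nat.rec (motive := fun _ => C × ℝ → E) (fun p => e0 p.1)
      (fun r prev p => gf r p • prev p) r
  have eh_zero : ∀ p, eh 0 p = e0 p.1 := fun _ => rfl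
  have eh_succ : ∀ r p, eh (r+1) p = gf r p • eh r p := fun _ _ => rfl
  -- triviality of the increment when φ vanishes
  have hgf_one : ∀ r p, r < k*m → φ (r % m) p.1 = 0 → gf r p = 1 := by
    intro r p hr hphi
    by_cases hcp : p.1 ∈ T (r % m)
    · have hEq : S (r+1) p.1 = S r p.1 := by
        rw [hSsucc _ _ hr, hphi, zero_div, add_zero]
      have hmidv : mid r p = S r p.1 := by
        rw [hmiddef, hEq]
        exact max_eq_left (min_le_right _ _)
      rw [hgfdef, if_pos hcp, hmidv, mul_inv_cancel]
    · rw [hgfdef, if_neg hcp]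
  -- continuity of the increments
  have hgfc : ∀ r, r < k*m → Continuous (gf r) := by
    intro r hr
    have hmidc : Continuous (mid r) :=
      ((hScont r).comp continuous_fst).max
        (continuous_snd.min ((hScont (r+1)).comp continuous_fst))
    have hmid_mem : ∀ p : C × ℝ, p.1 ∈ T (r%m) → Hr (p.1, mid r p) ∈ U (r/m) (r%m) := by
      intro p hp
      refine hmemb r hr p.1 hp _ ?_ ?_
      · rw [hmiddef]; exact le_max_left _ _
      · rw [hmiddef]; exact max_le (hSmono _ _ hr) (min_le_right _ _)
    have hS_mem : ∀ p : C × ℝ, p.1 ∈ T (r%m) → Hr (p.1, S r p.1) ∈ U (r/m) (r%m) :=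
      fun p hp => hmemb r hr p.1 hp _ le_rfl (hSmono _ _ hr)
    apply glue_closed (s := {p : C × ℝ | p.1 ∈ T (r%m)})
      (t := {p : C × ℝ | φ (r%m) p.1 = 0})
    · exact (hT _).preimage continuous_fst
    · exact isClosed_eq ((hφc _).comp continuous_fst) continuous_const
    · intro p
      by_cases hcp : p.1 ∈ T (r%m)
      · exact Or.inl hcp
      · exact Or.inr (hTφ _ _ hcp)
    · have hcont : ContinuousOn (fun p : C × ℝ =>
          ξ (r/m) (r%m) (Hr (p.1, mid r p)) * (ξ (r/m) (r%m) (Hr (p.1, S r p.1)))⁻¹)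
          {p : C × ℝ | p.1 ∈ T (r%m)} := by
        apply ContinuousOn.mul
        · exact (hξc _ _).comp
            (hHc.comp (continuous_fst.prodMk hmidc)).continuousOn
            (fun p hp => hmid_mem p hp)
        · exact ((hξc _ _).comp
            (hHc.comp (continuous_fst.prodMk ((hScont r).comp continuous_fst))).continuousOn
            (fun p hp => hS_mem p hp)).inv
      refine hcont.congr (fun p hp => ?_)
      simp only [Set.mem_setOf_eq] at hp
      rw [hgfdef, if_pos hp]
    · exact continuousOn_const.congr (fun p hp => hgf_one r p hr hp)
  -- continuity of the lifts
  have hehc : ∀ r, r ≤ k*m → Continuous (eh r) := by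
    intro r
    induction r with
    | zero => exact fun _ => he0c.comp continuous_fst
    | succ r ih =>
      intro hr
      have hrlt : r < k*m := lt_of_lt_of_le (Nat.lt_succ_self r) hr
      exact (hgfc r hrlt).smul (ih hrlt.le)
  -- the lifting invariant
  have hlift : ∀ r, r ≤ k*m → ∀ p : C × ℝ,
      f (eh r p) = Hr (p.1, max 0 (min p.2 (S r p.1))) := by
    intro r
    induction r with
    | zero =>
      intro _ p
      rw [eh_zero, he0 p.1, hS0, max_eq_left (min_le_right _ _)]
    | succ r ih =>
      intro hr p
      have hrlt : r < k*m := lt_of_lt_of_le (Nat.lt_succ_self r) hr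
      obtain ⟨c, t⟩ := p
      by_cases hcp : c ∈ T (r % m)
      · rw [eh_succ, hequiv, ih hrlt.le ⟨c, t⟩, hgfdef, if_pos hcp]
        by_cases ht : S r c ≤ t
        · have h1 : max 0 (min t (S r c)) = S r c := by
            rw [min_eq_right ht, max_eq_right (hSnn r c)]
          rw [h1]
          have hmem1 : Hr (c, S r c) ∈ U (r/m) (r%m) :=
            hmemb r hrlt c hcp _ le_rfl (hSmono _ _ hrlt)
          have hmem2 : Hr (c, mid r (c,t)) ∈ U (r/m) (r%m) :=
            hmemb r hrlt c hcp _
              (by rw [hmiddef]; exact le_max_left _ _)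
              (by rw [hmiddef]; exact max_le (hSmono _ _ hrlt) (min_le_right _ _))
          have hmidv : mid r (c,t) = min t (S (r+1) c) := by
            rw [hmiddef]
            exact max_eq_right (le_min ht (hSmono _ _ hrlt))
          rw [hret _ _ _ hmem2 _ hmem1, hmidv,
            max_eq_right (le_min (le_trans (hSnn r c) ht) (hSnn (r+1) c))]
        · push_neg at ht
          have hmidv : mid r (c,t) = S r c := by
            rw [hmiddef]
            exact max_eq_left ((min_le_left _ _).trans ht.le)
          rw [hmidv, mul_inv_cancel, one_smul, min_eq_left ht.le,
            min_eq_left (ht.le.trans (hSmono _ _ hrlt))]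
      · rw [eh_succ, hgfdef, if_neg hcp, one_smul, ih hrlt.le ⟨c, t⟩,
          hSsucc _ _ hrlt, hTφ _ _ hcp, zero_div, add_zero]
  -- the initial-condition invariant
  have hinit : ∀ r, r ≤ k*m → ∀ c t, t ≤ 0 → eh r (c, t) = e0 c := by
    intro r
    induction r with
    | zero => exact fun _ c t _ => eh_zero (c, t)
    | succ r ih =>
      intro hr c t ht
      have hrlt : r < k*m := lt_of_lt_of_le (Nat.lt_succ_self r) hr
      rw [eh_succ]
      have hg : gf r (c, t) = 1 := by
        by_cases hcp : c ∈ T (r % m)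
        · have hmidv : mid r (c,t) = S r c := by
            rw [hmiddef]
            exact max_eq_left ((min_le_left _ _).trans (ht.trans (hSnn r c)))
          rw [hgfdef, if_pos hcp, hmidv, mul_inv_cancel]
        · rw [hgfdef, if_neg hcp]
      rw [hg, one_smul, ih hrlt.le c t ht]
  refine ⟨eh (k*m), hehc _ le_rfl, ?_, fun c t ht => hinit _ le_rfl c t ht⟩
  intro c t h0 h1
  rw [hlift _ le_rfl (c, t)]
  simp only
  rw [hSR, min_eq_left h1, max_eq_right h0]

/-- A continuous `G`-equivariant map `f : E → X` onto a `G`-locally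
retractile space `X` is a Serre fibration: it has the homotopy lifting property with
respect to all cubes `[0,1]ⁿ`. -/
theorem equivariant_map_is_serre_fibration
    {G E X : Type*} [TopologicalSpace G] [Group G] [IsTopologicalGroup G]
    [TopologicalSpace E] [MulAction G E] [ContinuousSMul G E]
    [TopologicalSpace X] [MulAction G X] [ContinuousSMul G X]
    (f : E → X) (hf : Continuous f)
    (hequiv : ∀ (γ : G) (e : E), f (γ • e) = γ • f e)
    (hX : ∀ x : X, ∃ (U : Set X) (ξ : X → G),
      IsOpen U ∧ x ∈ U ∧ ContinuousOn ξ U ∧ ξ x = 1 ∧ ∀ y ∈ U, ξ y • x = y) :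
    ∀ (n : ℕ) (H : (Fin n → unitInterval) × unitInterval → X)
      (h : (Fin n → unitInterval) → E),
      Continuous H → Continuous h → (∀ c, f (h c) = H (c, 0)) →
      ∃ H' : (Fin n → unitInterval) × unitInterval → E,
        Continuous H' ∧ (∀ p, f (H' p) = H p) ∧ ∀ c, H' (c, 0) = h c := by
  intro n H h Hc hc hf0
  classical
  choose U ξ hUo hxU hξc hξ1 hξr using hX
  -- the extended homotopy, defined for all real times
  let Hr : (Fin n → unitInterval) × ℝ → X :=
    fun p => H (p.1, Set.projIcc 0 1 zero_le_one p.2)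
  have hHrdef : ∀ p, Hr p = H (p.1, Set.projIcc 0 1 zero_le_one p.2) := fun _ => rfl
  have hHrc : Continuous Hr :=
    Hc.comp (continuous_fst.prodMk (continuous_projIcc.comp continuous_snd))
  -- Lebesgue number for the pulled-back cover
  have hcov : (Set.univ : Set ((Fin n → unitInterval) × unitInterval)) ⊆
      ⋃ p, H ⁻¹' (U (H p)) := fun p _ => Set.mem_iUnion.2 ⟨p, hxU (H p)⟩
  obtain ⟨δ, hδ0, hδ⟩ := lebesgue_number_lemma_of_metric isCompact_univ
    (fun p => (hUo (H p)).preimage Hc) hcov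
  -- time grid
  obtain ⟨k, hk⟩ := exists_nat_gt (1/δ)
  have hkR : (0:ℝ) < (k:ℝ) := (one_div_pos.2 hδ0).trans hk
  have hk0 : 0 < k := by exact_mod_cast hkR
  have hkδ : 1/(k:ℝ) < δ := by
    rw [div_lt_iff₀ hkR]
    have := (div_lt_iff₀ hδ0).1 hk
    linarith [mul_comm δ (k:ℝ)]
  -- finite cover of the cube by small balls
  obtain ⟨tS, htS⟩ := isCompact_univ.elim_finite_subcover
    (fun c : (Fin n → unitInterval) => Metric.ball c (δ/4))
    (fun _ => Metric.isOpen_ball)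
    (fun c _ => Set.mem_iUnion.2 ⟨c, Metric.mem_ball_self (by positivity)⟩)
  have hCne : Nonempty (Fin n → unitInterval) := ⟨fun _ => 0⟩
  obtain ⟨c0⟩ := hCne
  set m := tS.card with hmdef
  have hm0 : 0 < m := by
    rcases Set.mem_iUnion₂.1 (htS (Set.mem_univ c0)) with ⟨c', hc', _⟩
    exact Finset.card_pos.2 ⟨c', hc'⟩
  let w : ℕ → (Fin n → unitInterval) :=
    fun l => if hl : l < m then (tS.equivFin.symm ⟨l, hl⟩ : tS) else c0
  have hwcov : ∀ c, ∃ l, l < m ∧ dist c (w l) < δ/4 := by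
    intro c
    rcases Set.mem_iUnion₂.1 (htS (Set.mem_univ c)) with ⟨c', hc', hmem⟩
    refine ⟨(tS.equivFin ⟨c', hc'⟩ : Fin m), (tS.equivFin ⟨c', hc'⟩).2, ?_⟩
    have : w ((tS.equivFin ⟨c', hc'⟩ : Fin m) : ℕ) = c' := by
      show (if hl : _ then _ else _) = c'
      rw [dif_pos (tS.equivFin ⟨c', hc'⟩).2]
      congr 1
      rw [show (⟨((tS.equivFin ⟨c', hc'⟩ : Fin m) : ℕ), (tS.equivFin ⟨c', hc'⟩).2⟩ : Fin m)
        = tS.equivFin ⟨c', hc'⟩ from rfl, Equiv.symm_apply_apply]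
    rw [this]
    exact Metric.mem_ball.1 hmem
  -- partition of unity
  let g : ℕ → (Fin n → unitInterval) → ℝ := fun l c => max (δ/4 - dist c (w l)) 0
  have hgc : ∀ l, Continuous (g l) := fun l =>
    (continuous_const.sub (continuous_id.dist continuous_const)).max continuous_const
  have hg0 : ∀ l c, 0 ≤ g l c := fun l c => le_max_right _ _
  let Sd : (Fin n → unitInterval) → ℝ := fun c => ∑ j ∈ Finset.range m, g j c
  have hSdc : Continuous Sd := continuous_finset_sum _ fun j _ => hgc j
  have hSd0 : ∀ c, 0 < Sd c := by
    intro c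
    obtain ⟨l, hl, hd⟩ := hwcov c
    have hpos : 0 < g l c := lt_max_iff.2 (Or.inl (by linarith))
    exact lt_of_lt_of_le hpos
      (Finset.single_le_sum (fun j _ => hg0 j c) (Finset.mem_range.2 hl))
  let φ : ℕ → (Fin n → unitInterval) → ℝ := fun l c => g l c / Sd c
  have hφc : ∀ l, Continuous (φ l) := fun l => (hgc l).div hSdc (fun c => (hSd0 c).ne')
  have hφ0 : ∀ l c, 0 ≤ φ l c := fun l c => div_nonneg (hg0 l c) (hSd0 c).le
  have hφ1 : ∀ c, ∑ j ∈ Finset.range m, φ j c = 1 := by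
    intro c
    show (∑ j ∈ Finset.range m, g j c / Sd c) = 1
    rw [← Finset.sum_div]
    exact div_self (hSd0 c).ne'
  let T : ℕ → Set (Fin n → unitInterval) := fun l => Metric.closedBall (w l) (δ/4)
  have hTc : ∀ l, IsClosed (T l) := fun l => Metric.isClosed_closedBall
  have hTφ : ∀ l c, c ∉ T l → φ l c = 0 := by
    intro l c hcT
    have hd : δ/4 < dist c (w l) := by
      by_contra hcon
      exact hcT (Metric.mem_closedBall.2 (not_lt.1 hcon))
    have hgz : g l c = 0 := max_eq_right (by linarith)
    show g l c / Sd c = 0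
    rw [hgz, zero_div]
  -- choose the retraction for each time-step / ball pair
  have hxex : ∀ i l : ℕ, ∃ xv : X, i < k → l < m → ∀ c ∈ T l, ∀ t : ℝ,
      (i:ℝ)/k ≤ t → t ≤ ((i:ℝ)+1)/k → Hr (c, t) ∈ U xv := by
    intro i l
    by_cases hil : i < k ∧ l < m
    · obtain ⟨hi, _⟩ := hil
      have hi1 : ((i:ℝ)+1)/k ≤ 1 := by
        rw [div_le_one hkR]
        exact_mod_cast Nat.succ_le_of_lt hi
      have hi0 : (0:ℝ) ≤ (i:ℝ)/k := by positivity
      have hmemIcc : (i:ℝ)/k ∈ Set.Icc (0:ℝ) 1 := by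
        constructor
        · exact hi0
        · refine le_trans ?_ hi1
          gcongr
          linarith
      obtain ⟨q, hq⟩ := hδ (w l, Set.projIcc 0 1 zero_le_one ((i:ℝ)/k)) (Set.mem_univ _)
      refine ⟨H q, fun _ _ c hcT t h1 h2 => ?_⟩
      have htmem : t ∈ Set.Icc (0:ℝ) 1 := ⟨le_trans hi0 h1, le_trans h2 hi1⟩
      rw [hHrdef]
      apply hq
      rw [Metric.mem_ball, Prod.dist_eq]
      apply max_lt
      · exact lt_of_le_of_lt (Metric.mem_closedBall.1 hcT) (by linarith)
      · have e1 : ((Set.projIcc (0:ℝ) 1 zero_le_one t : unitInterval) : ℝ) = t := by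
          rw [Set.projIcc_of_mem _ htmem]
        have e2 : ((Set.projIcc (0:ℝ) 1 zero_le_one ((i:ℝ)/k) : unitInterval) : ℝ)
            = (i:ℝ)/k := by
          rw [Set.projIcc_of_mem _ hmemIcc]
        rw [Subtype.dist_eq, e1, e2, Real.dist_eq]
        have htup : t - (i:ℝ)/k ≤ 1/k := by
          have hexp : ((i:ℝ)+1)/k = (i:ℝ)/k + 1/k := by ring
          linarith
        rw [abs_of_nonneg (by linarith : (0:ℝ) ≤ t - (i:ℝ)/k)]
        linarith
    · exact ⟨H (c0, 0), fun hi hl => absurd ⟨hi, hl⟩ hil⟩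
  choose x hx using hxex
  -- retraction algebra
  have hret : ∀ (i l : ℕ), ∀ y ∈ U (x i l), ∀ y' ∈ U (x i l),
      ((ξ (x i l)) y * ((ξ (x i l)) y')⁻¹) • y' = y := by
    intro i l y hy y' hy'
    rw [mul_smul]
    have h1 : (ξ (x i l) y')⁻¹ • y' = x i l := by
      have hy'' := hξr (x i l) y' hy'
      calc (ξ (x i l) y')⁻¹ • y'
          = (ξ (x i l) y')⁻¹ • (ξ (x i l) y' • x i l) := by rw [hy'']
        _ = x i l := inv_smul_smul _ _
    rw [h1, hξr (x i l) y hy]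
  -- initial condition in the `Hr` formulation
  have he0 : ∀ c, f (h c) = Hr (c, 0) := by
    intro c
    rw [hf0 c, hHrdef]
    have : Set.projIcc (0:ℝ) 1 zero_le_one 0 = (0 : unitInterval) := by
      rw [Set.projIcc_left]
      exact Subtype.ext (by norm_num)
    rw [this]
  -- apply the main construction
  obtain ⟨Hh, hHhc, hHhf, hHh0⟩ := aux_lift f hequiv k m hk0 hm0 φ hφc hφ0 hφ1
    T hTc hTφ Hr hHrc (fun i l => U (x i l)) (fun i l => ξ (x i l))
    (fun i l => hξc (x i l)) (fun i l hi hl c hcT t h1 h2 => hx i l hi hl c hcT t h1 h2)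
    hret h hc he0
  refine ⟨fun p => Hh (p.1, (p.2 : ℝ)),
    hHhc.comp (continuous_fst.prodMk (continuous_subtype_val.comp continuous_snd)),
    ?_, ?_⟩
  · intro p
    rw [hHhf p.1 (p.2 : ℝ) p.2.2.1 p.2.2.2, hHrdef]
    rw [Set.projIcc_val zero_le_one p.2]
  · intro c
    have h00 : ((0 : unitInterval) : ℝ) ≤ 0 := by norm_num
    exact hHh0 c _ h00
end

section
/- Let G be a topological group acting continuously on topological spaces X and Y, and let f : X → Y be a continuous G-equivariant map which admits local sections, i.e., for every y ∈ Y there are an open neighbourhood U of y and a continuous map s : U → X with f(s(u)) = u for all u ∈ U. If X is G-locally retractile, then Y is G-locally retractile. -/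
/-- If `f : X → Y` is a continuous `G`-equivariant map admitting local
sections and `X` is `G`-locally retractile, then `Y` is `G`-locally retractile. -/
theorem locally_retractile_of_local_sections
    {G X Y : Type*} [TopologicalSpace G] [Group G] [IsTopologicalGroup G]
    [TopologicalSpace X] [MulAction G X] [ContinuousSMul G X]
    [TopologicalSpace Y] [MulAction G Y] [ContinuousSMul G Y]
    (f : X → Y) (hf : Continuous f)
    (hequiv : ∀ (γ : G) (x : X), f (γ • x) = γ • f x)
    (hsec : ∀ y : Y, ∃ (U : Set Y) (s : Y → X),
      IsOpen U ∧ y ∈ U ∧ ContinuousOn s U ∧ ∀ u ∈ U, f (s u) = u)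
    (hX : ∀ x : X, ∃ (U : Set X) (ξ : X → G),
      IsOpen U ∧ x ∈ U ∧ ContinuousOn ξ U ∧ ξ x = 1 ∧ ∀ y ∈ U, ξ y • x = y) :
    ∀ y : Y, ∃ (U : Set Y) (ξ : Y → G),
      IsOpen U ∧ y ∈ U ∧ ContinuousOn ξ U ∧ ξ y = 1 ∧ ∀ z ∈ U, ξ z • y = z := by
  intro y
  obtain ⟨U, s, hUo, hyU, hs, hsf⟩ := hsec y
  obtain ⟨V, ξ, hVo, hxV, hξ, hξ1, hξr⟩ := hX (s y)
  refine ⟨U ∩ s ⁻¹' V, fun z => ξ (s z),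
    hs.isOpen_inter_preimage hUo hVo, ⟨hyU, hxV⟩,
    (hξ.comp (hs.mono Set.inter_subset_left) fun z hz => hz.2), hξ1, ?_⟩
  intro z hz
  have h1 : ξ (s z) • s y = s z := hξr _ hz.2
  have := congrArg f h1
  rw [hequiv, hsf y hyU, hsf z hz.1] at this
  exact this
end

section
/- Let G be a topological group acting continuously on topological spaces X and Y, and let f : X → Y be a continuous G-equivariant map which admits local sections, i.e., for every y ∈ Y there are an open neighbourhood U of y and a continuous map s : U → X with f(s(u)) = u for all u ∈ U. If X is G-locally retractile, then f is a locally trivial fibration: for every y ∈ Y there exist an open neighbourhood U of y and a homeomorphism φ : f⁻¹({y}) × U → f⁻¹(U) (subspace topologies) with f(φ(z, u)) = u for all z ∈ f⁻¹({y}) and u ∈ U. -/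
/-- If `f : X → Y` is a continuous `G`-equivariant map admitting local
sections and `X` is `G`-locally retractile, then `f` is a locally trivial fibration:
every `y ∈ Y` has an open neighbourhood `U` over which `f` is trivialised by a
homeomorphism `f ⁻¹' {y} × U ≃ₜ f ⁻¹' U` commuting with the projections to `U`. -/
theorem locally_trivial_of_local_sections
    {G X Y : Type*} [TopologicalSpace G] [Group G] [IsTopologicalGroup G]
    [TopologicalSpace X] [MulAction G X] [ContinuousSMul G X]
    [TopologicalSpace Y] [MulAction G Y] [ContinuousSMul G Y]
    (f : X → Y) (hf : Continuous f)
    (hequiv : ∀ (γ : G) (x : X), f (γ • x) = γ • f x)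
    (hsec : ∀ y : Y, ∃ (U : Set Y) (s : Y → X),
      IsOpen U ∧ y ∈ U ∧ ContinuousOn s U ∧ ∀ u ∈ U, f (s u) = u)
    (hX : ∀ x : X, ∃ (U : Set X) (ξ : X → G),
      IsOpen U ∧ x ∈ U ∧ ContinuousOn ξ U ∧ ξ x = 1 ∧ ∀ y ∈ U, ξ y • x = y) :
    ∀ y : Y, ∃ U : Set Y, IsOpen U ∧ y ∈ U ∧
      ∃ φ : (f ⁻¹' {y}) × U ≃ₜ (f ⁻¹' U),
        ∀ (z : f ⁻¹' {y}) (u : U), f (φ (z, u) : X) = (u : Y) := by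
  intro y
  obtain ⟨U, s, hUo, hyU, hs, hfs⟩ := hsec y
  obtain ⟨V, ξ, hVo, hx0V, hξ, hξ1, hξV⟩ := hX (s y)
  set W : Set Y := U ∩ s ⁻¹' V with hWdef
  have hWo : IsOpen W := hs.isOpen_inter_preimage hUo hVo
  have hyW : y ∈ W := ⟨hyU, hx0V⟩
  have hWU : W ⊆ U := Set.inter_subset_left
  -- key algebraic fact: ξ (s u) • y = u for u ∈ W
  have hgy : ∀ u ∈ W, ξ (s u) • y = u := by
    intro u hu
    have h1 : ξ (s u) • s y = s u := hξV _ hu.2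
    have h2 : f (s y) = y := hfs y hyU
    calc ξ (s u) • y = f (ξ (s u) • s y) := by rw [hequiv, h2]
      _ = u := by rw [h1]; exact hfs u (hWU hu)
  -- the map g = ξ ∘ s restricted to W is continuous
  have hgW : ContinuousOn (fun u => ξ (s u)) W :=
    hξ.comp (hs.mono hWU) (fun u hu => hu.2)
  have hgcont : Continuous (W.restrict fun u => ξ (s u)) :=
    continuousOn_iff_continuous_restrict.mp hgW
  refine ⟨W, hWo, hyW, ?_⟩
  have key : ∀ (z : f ⁻¹' {y}) (u : W), f (ξ (s (u : Y)) • (z : X)) = (u : Y) := by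
    intro z u
    rw [hequiv, show f (z : X) = y from z.2, hgy _ u.2]
  have keyinv : ∀ x : f ⁻¹' W, f ((ξ (s (f (x : X))))⁻¹ • (x : X)) ∈ ({y} : Set Y) := by
    intro x
    rw [Set.mem_singleton_iff, hequiv, inv_smul_eq_iff, hgy _ x.2]
  refine ⟨⟨⟨fun p => ⟨ξ (s (p.2 : Y)) • (p.1 : X), by show f _ ∈ W; rw [key]; exact p.2.2⟩,
      fun x => (⟨(ξ (s (f (x : X))))⁻¹ • (x : X), keyinv x⟩, ⟨f (x : X), x.2⟩),
      ?_, ?_⟩, ?_, ?_⟩, ?_⟩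
  · -- left inverse
    rintro ⟨z, u⟩
    have h1 : f (ξ (s (u : Y)) • (z : X)) = (u : Y) := key z u
    ext
    · simp only [h1, inv_smul_smul]
    · simpa using h1
  · -- right inverse
    rintro ⟨x, hx⟩
    have h1 : f ((ξ (s (f x)))⁻¹ • x) = y := keyinv ⟨x, hx⟩
    simp only
    ext
    simp only [h1, smul_inv_smul]
  · -- continuity of toFun
    apply Continuous.subtype_mk
    exact ((hgcont.comp (continuous_snd)).smul
      (continuous_subtype_val.comp continuous_fst))
  · -- continuity of invFun
    apply Continuous.prodMk
    · apply Continuous.subtype_mk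
      have hc : Continuous (fun x : f ⁻¹' W => (⟨f (x : X), x.2⟩ : W)) :=
        Continuous.subtype_mk (hf.comp continuous_subtype_val) _
      exact ((hgcont.comp hc).inv).smul continuous_subtype_val
    · exact Continuous.subtype_mk (hf.comp continuous_subtype_val) _
  · -- projection property
    intro z u
    exact key z u
end

section
/- Let G be a topological group acting continuously on a topological space F, let B be a compact topological space, and let f₀ : B → F be a continuous map. Suppose V ⊆ F × F is an open set with (f₀(b), f₀(b)) ∈ V for every b ∈ B, and φ : V → G is a continuous map with φ(x, y) • x = y for every (x, y) ∈ V and φ(x, x) = 1 whenever (x, x) ∈ V. Then the set A = { f ∈ C(B, F) : (f₀(b), f(b)) ∈ V for all b ∈ B } is an open neighbourhood of f₀ in the compact-open topology, the map ψ : A → C(B, G) defined by ψ(f)(b) = φ(f₀(b), f(b)) is continuous (with the compact-open topology on C(B, G)), ψ(f₀) is the constant map at the identity, and ψ(f)(b) • f₀(b) = f(b) for every f ∈ A and b ∈ B. In particular, (A, ψ) is a C(B,G)-local retraction around f₀ for the pointwise action of C(B,G) on C(B,F). -/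
open Set ContinuousMap

/-- The neighbourhood `A = {f ∈ C(B, F) | ∀ b, (f₀ b, f b) ∈ V}` of `f₀`. -/
def retractionNbhd {B F : Type*} [TopologicalSpace B] [TopologicalSpace F]
    (f₀ : C(B, F)) (V : Set (F × F)) : Set C(B, F) :=
  {f : C(B, F) | ∀ b : B, (f₀ b, f b) ∈ V}

lemma continuous_prodMk_left' {B F F' : Type*} [TopologicalSpace B] [TopologicalSpace F]
    [TopologicalSpace F'] (f₀ : C(B, F')) :
    Continuous fun f : C(B, F) => f₀.prodMk f := by
  classical
  rw [continuous_compactOpen]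
  intro K hK U hU
  rw [isOpen_iff_forall_mem_open]
  intro f hf
  have h : ∀ b : B, b ∈ K → ∃ P Q : Set _, IsOpen P ∧ IsOpen Q ∧ f₀ b ∈ P ∧ f b ∈ Q ∧
      P ×ˢ Q ⊆ U := by
    intro b hb
    rcases isOpen_prod_iff.1 hU (f₀ b) (f b) (hf hb) with ⟨P, Q, hP, hQ, h1, h2, h3⟩
    exact ⟨P, Q, hP, hQ, h1, h2, h3⟩
  choose! P Q hP hQ hfP hfQ hPQ using h
  set W : B → Set B := fun b => f₀ ⁻¹' P b ∩ f ⁻¹' Q b with hW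
  have hWopen : ∀ b ∈ K, IsOpen (W b) := fun b hb =>
    ((hP b hb).preimage f₀.continuous).inter ((hQ b hb).preimage f.continuous)
  have hKW : K ⊆ ⋃ b ∈ K, W b := fun x hx => mem_biUnion hx ⟨hfP x hx, hfQ x hx⟩
  obtain ⟨t, htK, htfin, htcover⟩ := hK.elim_finite_subcover_image hWopen hKW
  obtain ⟨tf, htf⟩ := htfin.exists_finset_coe
  have htK' : ∀ b ∈ tf, b ∈ K := fun b hb => htK (htf ▸ hb)
  have htcover' : K ⊆ ⋃ b ∈ tf, W b := by
    intro x hx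
    rcases mem_iUnion₂.1 (htcover hx) with ⟨b, hb, hxb⟩
    have : b ∈ (tf : Set B) := htf ▸ hb
    exact mem_iUnion₂.2 ⟨b, this, hxb⟩
  -- compact pieces indexed by subsets S of tf
  set KS : Finset B → Set B := fun S => K ∩ (⋃ b ∈ tf \ S, W b)ᶜ with hKS
  have hKScompact : ∀ S : Finset B, IsCompact (KS S) := fun S =>
    hK.inter_right (isOpen_biUnion fun b hb => hWopen b (htK' b (Finset.mem_sdiff.1 hb).1)).isClosed_compl
  refine ⟨⋂ S ∈ tf.powerset, {g : C(B, F) | MapsTo g (KS S) (⋃ b ∈ S, Q b)}, ?_, ?_, ?_⟩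
  · -- contained in the target set
    intro g hg x hx
    set S : Finset B := tf.filter (fun b => x ∈ W b) with hS
    have hxKS : x ∈ KS S := by
      refine ⟨hx, ?_⟩
      intro hmem
      rcases mem_iUnion₂.1 hmem with ⟨b, hb, hxb⟩
      rcases Finset.mem_sdiff.1 hb with ⟨hbt, hbS⟩
      exact hbS (Finset.mem_filter.2 ⟨hbt, hxb⟩)
    have hgx : g x ∈ ⋃ b ∈ S, Q b :=
      mem_iInter₂.1 hg S (Finset.mem_powerset.2 (Finset.filter_subset _ _)) hxKS
    rcases mem_iUnion₂.1 hgx with ⟨b, hb, hgxb⟩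
    rcases Finset.mem_filter.1 hb with ⟨hbt, hxWb⟩
    exact hPQ b (htK' b hbt) ⟨hxWb.1, hgxb⟩
  · exact isOpen_biInter_finset fun S hS =>
      isOpen_setOf_mapsTo (hKScompact S)
        (isOpen_biUnion fun b hb => hQ b (htK' b (Finset.mem_powerset.1 hS hb)))
  · -- f belongs
    refine mem_iInter₂.2 fun S hS x hx => ?_
    rcases mem_iUnion₂.1 (htcover' hx.1) with ⟨b, hbt, hxWb⟩
    have hbS : b ∈ S := by
      by_contra hbS
      exact hx.2 (mem_iUnion₂.2 ⟨b, Finset.mem_sdiff.2 ⟨hbt, hbS⟩, hxWb⟩)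
    exact mem_iUnion₂.2 ⟨b, hbS, hxWb.2⟩

/-- Let `G` act continuously on `F`, let `B` be a compact space and
`f₀ : B → F` continuous.  Given an open `V ⊆ F × F` containing `(f₀ b, f₀ b)` for all
`b`, and a continuous `φ : V → G` with `φ (x, y) • x = y` on `V` and `φ (x, x) = 1`,
the set `A = {f | ∀ b, (f₀ b, f b) ∈ V}` is an open neighbourhood of `f₀` in the
compact-open topology, and `ψ : A → C(B, G)`, `ψ f b = φ (f₀ b, f b)`, is continuous,
sends `f₀` to the constant identity map, and satisfies `ψ f b • f₀ b = f b`.  In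
particular `(A, ψ)` is a `C(B,G)`-local retraction around `f₀` for the pointwise
action of `C(B, G)` on `C(B, F)`. -/
theorem mapping_space_local_retraction
    {G F B : Type*} [TopologicalSpace G] [Group G] [IsTopologicalGroup G]
    [TopologicalSpace F] [MulAction G F] [ContinuousSMul G F]
    [TopologicalSpace B] [CompactSpace B]
    (f₀ : C(B, F)) (V : Set (F × F)) (hV : IsOpen V)
    (hdiag : ∀ b : B, (f₀ b, f₀ b) ∈ V)
    (φ : F × F → G) (hφc : ContinuousOn φ V)
    (hφ : ∀ p ∈ V, φ p • p.1 = p.2)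
    (hφ1 : ∀ x : F, (x, x) ∈ V → φ (x, x) = 1) :
    IsOpen (retractionNbhd f₀ V) ∧
    f₀ ∈ retractionNbhd f₀ V ∧
    ∃ ψ : retractionNbhd f₀ V → C(B, G),
      Continuous ψ ∧
      (∀ (f : retractionNbhd f₀ V) (b : B), ψ f b = φ (f₀ b, (f : C(B, F)) b)) ∧
      (∀ b : B, ψ ⟨f₀, hdiag⟩ b = 1) ∧
      (∀ (f : retractionNbhd f₀ V) (b : B), ψ f b • f₀ b = (f : C(B, F)) b) := by
  have hpair : Continuous fun f : C(B, F) => f₀.prodMk f := continuous_prodMk_left' f₀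
  have hopen : IsOpen (retractionNbhd f₀ V) := by
    have : retractionNbhd f₀ V =
        (fun f : C(B, F) => f₀.prodMk f) ⁻¹' {h : C(B, F × F) | MapsTo h univ V} := by
      ext f
      simp [retractionNbhd, MapsTo]
    rw [this]
    exact (isOpen_setOf_mapsTo isCompact_univ hV).preimage hpair
  refine ⟨hopen, hdiag, ?_⟩
  -- the restricted φ as a continuous map on the subtype V
  let φ' : C(V, G) := ⟨V.restrict φ, hφc.restrict⟩
  -- the map into C(B, V)
  let toV : retractionNbhd f₀ V → C(B, V) := fun f =>
    ⟨fun b => ⟨(f₀ b, (f : C(B, F)) b), f.2 b⟩,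
      (f₀.continuous.prodMk (f : C(B, F)).continuous).subtype_mk _⟩
  have htoV : Continuous toV := by
    let ι : C(V, F × F) := ⟨Subtype.val, continuous_subtype_val⟩
    have hind : Topology.IsInducing fun h : C(B, V) => ι.comp h :=
      ContinuousMap.isInducing_postcomp ι Topology.IsInducing.subtypeVal
    rw [hind.continuous_iff]
    have : (fun f : retractionNbhd f₀ V => ι.comp (toV f)) =
        fun f : retractionNbhd f₀ V => f₀.prodMk (f : C(B, F)) := by
      ext f b <;> rfl
    show Continuous fun f : retractionNbhd f₀ V => ι.comp (toV f)
    rw [this]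
    exact hpair.comp continuous_subtype_val
  refine ⟨fun f => φ'.comp (toV f), (continuous_postcomp φ').comp htoV, ?_, ?_, ?_⟩
  · intro f b; rfl
  · intro b; exact hφ1 (f₀ b) (hdiag b)
  · intro f b; exact hφ (f₀ b, (f : C(B, F)) b) (f.2 b)
end

section
/- Let G be a topological group acting continuously on a topological space F, let x₀ ∈ F, and let (U, ξ) be a G-local retraction around x₀. Let S = { g ∈ G : g • x₀ = x₀ } be the stabiliser of x₀ with the subspace topology, and define Φ : G × F → F × F by Φ(g, x) = (x, g • x). Then the map θ : U × U × S → G × F defined by θ(x, y, k) = (ξ(y) · k · ξ(x)⁻¹, x) is a homeomorphism onto the subspace Φ⁻¹(U × U) = { (g, x) : x ∈ U and g • x ∈ U }, it satisfies Φ(θ(x, y, k)) = (x, y) for all (x, y, k) ∈ U × U × S, and its inverse sends (g, x) to (x, g • x, ξ(g • x)⁻¹ · g · ξ(x)). In particular, Φ restricted over U × U is a trivial bundle with fibre the stabiliser S. -/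
/-- The map `Φ : G × F → F × F`, `Φ (g, x) = (x, g • x)`. -/
def actionGraphMap (G F : Type*) [SMul G F] : G × F → F × F :=
  fun p => (p.2, p.1 • p.2)

/-- Let `(U, ξ)` be a `G`-local retraction around `x₀ ∈ F` and let
`S` be the stabiliser of `x₀`.  Then `θ : U × U × S → G × F`,
`θ (x, y, k) = (ξ y * k * (ξ x)⁻¹, x)`, is a homeomorphism onto the subspace
`Φ ⁻¹' (U ×ˢ U) = {(g, x) | x ∈ U ∧ g • x ∈ U}` where `Φ (g, x) = (x, g • x)`; it
satisfies `Φ (θ (x, y, k)) = (x, y)`, and its inverse sends `(g, x)` to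
`(x, g • x, (ξ (g • x))⁻¹ * g * ξ x)`.  In particular `Φ` restricted over `U × U` is a
trivial bundle with fibre the stabiliser `S`. -/
theorem action_graph_map_trivialisation
    {G F : Type*} [TopologicalSpace G] [Group G] [IsTopologicalGroup G]
    [TopologicalSpace F] [MulAction G F] [ContinuousSMul G F]
    (x₀ : F) (U : Set F) (ξ : F → G)
    (hU : IsOpen U) (hx₀ : x₀ ∈ U) (hξc : ContinuousOn ξ U)
    (hξ1 : ξ x₀ = 1) (hξ : ∀ y ∈ U, ξ y • x₀ = y) :
    ∃ θ : (U × U × MulAction.stabilizer G x₀) ≃ₜ (actionGraphMap G F ⁻¹' (U ×ˢ U)),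
      (∀ (x y : U) (k : MulAction.stabilizer G x₀),
        (θ (x, y, k) : G × F) = (ξ (y : F) * (k : G) * (ξ (x : F))⁻¹, (x : F))) ∧
      (∀ (x y : U) (k : MulAction.stabilizer G x₀),
        actionGraphMap G F (θ (x, y, k) : G × F) = ((x : F), (y : F))) ∧
      (∀ p : actionGraphMap G F ⁻¹' (U ×ˢ U),
        ((θ.symm p).1 : F) = (p : G × F).2 ∧
        ((θ.symm p).2.1 : F) = (p : G × F).1 • (p : G × F).2 ∧
        ((θ.symm p).2.2 : G)
          = (ξ ((p : G × F).1 • (p : G × F).2))⁻¹ * (p : G × F).1 * ξ ((p : G × F).2)) := by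
  have key : ∀ (x y : U) (k : MulAction.stabilizer G x₀),
      (ξ (y : F) * (k : G) * (ξ (x : F))⁻¹) • (x : F) = (y : F) := by
    intro x y k
    have hx : (ξ (x : F))⁻¹ • (x : F) = x₀ := by
      rw [inv_smul_eq_iff, hξ _ x.2]
    rw [mul_smul, mul_smul, hx, k.2, hξ _ y.2]
  have hmemU : ∀ (p : G × F), actionGraphMap G F p ∈ U ×ˢ U →
      p.2 ∈ U ∧ p.1 • p.2 ∈ U := fun p hp => ⟨hp.1, hp.2⟩
  have htoMem : ∀ (q : U × U × MulAction.stabilizer G x₀),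
      (ξ (q.2.1 : F) * (q.2.2 : G) * (ξ (q.1 : F))⁻¹, (q.1 : F)) ∈
        actionGraphMap G F ⁻¹' (U ×ˢ U) := by
    intro q
    simp only [Set.mem_preimage, actionGraphMap, Set.mem_prod]
    exact ⟨q.1.2, by rw [key]; exact q.2.1.2⟩
  have hinvMem : ∀ (p : actionGraphMap G F ⁻¹' (U ×ˢ U)),
      (ξ ((p : G × F).1 • (p : G × F).2))⁻¹ * (p : G × F).1 * ξ ((p : G × F).2) ∈
        MulAction.stabilizer G x₀ := by
    intro p
    have h2 := (hmemU _ p.2).1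
    have h3 := (hmemU _ p.2).2
    rw [MulAction.mem_stabilizer_iff, mul_smul, mul_smul, hξ _ h2,
      inv_smul_eq_iff, hξ _ h3]
  refine ⟨⟨⟨fun q => ⟨(ξ (q.2.1 : F) * (q.2.2 : G) * (ξ (q.1 : F))⁻¹, (q.1 : F)), htoMem q⟩,
      fun p => (⟨(p : G × F).2, (hmemU _ p.2).1⟩,
        ⟨(p : G × F).1 • (p : G × F).2, (hmemU _ p.2).2⟩,
        ⟨(ξ ((p : G × F).1 • (p : G × F).2))⁻¹ * (p : G × F).1 * ξ ((p : G × F).2),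
          hinvMem p⟩), ?_, ?_⟩, ?_, ?_⟩, fun x y k => rfl, ?_, fun p => ⟨rfl, rfl, rfl⟩⟩
  · rintro ⟨x, y, k⟩
    refine Prod.ext (Subtype.ext ?_) (Prod.ext (Subtype.ext ?_) (Subtype.ext ?_))
    · rfl
    · simpa using key x y k
    · show (ξ ((ξ (y : F) * (k : G) * (ξ (x : F))⁻¹) • (x : F)))⁻¹ *
        (ξ (y : F) * (k : G) * (ξ (x : F))⁻¹) * ξ (x : F) = (k : G)
      rw [key]
      group
  · rintro ⟨⟨g, x⟩, hp⟩
    refine Subtype.ext (Prod.ext ?_ rfl)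
    show (ξ (g • x) * ((ξ (g • x))⁻¹ * g * ξ x) * (ξ x)⁻¹) = g
    group
  · apply Continuous.subtype_mk
    have hc : Continuous (fun u : U => ξ (u : F)) := hξc.restrict
    refine Continuous.prodMk ?_ (continuous_subtype_val.comp continuous_fst)
    exact ((hc.comp (continuous_fst.comp continuous_snd)).mul
      (continuous_subtype_val.comp (continuous_snd.comp continuous_snd))).mul
      ((hc.comp continuous_fst).inv)
  · have hc : Continuous (fun u : U => ξ (u : F)) := hξc.restrict
    have c1 : Continuous (fun p : actionGraphMap G F ⁻¹' (U ×ˢ U) => (p : G × F).1) :=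
      continuous_fst.comp continuous_subtype_val
    have c2 : Continuous (fun p : actionGraphMap G F ⁻¹' (U ×ˢ U) => (p : G × F).2) :=
      continuous_snd.comp continuous_subtype_val
    have c3 : Continuous (fun p : actionGraphMap G F ⁻¹' (U ×ˢ U) =>
        (⟨(p : G × F).2, (hmemU _ p.2).1⟩ : U)) := c2.subtype_mk _
    have c4 : Continuous (fun p : actionGraphMap G F ⁻¹' (U ×ˢ U) =>
        (⟨(p : G × F).1 • (p : G × F).2, (hmemU _ p.2).2⟩ : U)) := (c1.smul c2).subtype_mk _
    refine Continuous.prodMk c3 (Continuous.prodMk c4 ?_)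
    exact ((((hc.comp c4).inv.mul c1).mul (hc.comp c3))).subtype_mk _
  · intro x y k
    show actionGraphMap G F (ξ (y : F) * (k : G) * (ξ (x : F))⁻¹, (x : F)) = _
    simp only [actionGraphMap, key]
end

section
/- Let i : A → X, j : A' → X', g : A → A', f : X → X' be continuous maps between topological spaces with f ∘ i = j ∘ g. Suppose there are a continuous map t : X → A' and a continuous homotopy H : X × [0,1] → X' with H(−, 0) = f and H(−, 1) = j ∘ t. Then the induced map of mapping cones Cone(f,g) : Cone(i) → Cone(j) factors through the double cone: there is a continuous map h : CA ∪_i CX → Cone(j) with h ∘ p = Cone(f,g), where p : Cone(i) → CA ∪_i CX is the canonical map. -/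
/-- The relation defining the mapping cone of `i : A → X`: the cone `CA = (A × I)/(A × {1})`
is glued to `X` by identifying `(a, 0)` with `i a`. -/
def MCRel {A X : Type*} (i : A → X) (p q : (A × unitInterval) ⊕ X) : Prop :=
  (∃ a b : A, p = Sum.inl (a, 1) ∧ q = Sum.inl (b, 1)) ∨
  (∃ a : A, p = Sum.inl (a, 0) ∧ q = Sum.inr (i a))

/-- The mapping cone `Cone(i)` of a map `i : A → X`. -/
abbrev MappingCone {A X : Type*} (i : A → X) := Quot (MCRel i)

/-- The relation defining the double cone `CA ∪_i CX`: the cones on `A` and on `X` are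
glued by identifying `(a, 0)` with `(i a, 0)`. -/
def DCRel {A X : Type*} (i : A → X) (p q : (A × unitInterval) ⊕ (X × unitInterval)) : Prop :=
  (∃ a b : A, p = Sum.inl (a, 1) ∧ q = Sum.inl (b, 1)) ∨
  (∃ x y : X, p = Sum.inr (x, 1) ∧ q = Sum.inr (y, 1)) ∨
  (∃ a : A, p = Sum.inl (a, 0) ∧ q = Sum.inr (i a, 0))

/-- The double cone `CA ∪_i CX` of a map `i : A → X`. -/
abbrev DoubleCone {A X : Type*} (i : A → X) := Quot (DCRel i)

/-- The canonical map `p : Cone(i) → CA ∪_i CX`: the identity on the image of `CA`, and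
`x ↦ (x, 0)` on `X`. -/
def conePush {A X : Type*} (i : A → X) : MappingCone i → DoubleCone i :=
  Quot.lift
    (Sum.elim (fun p => Quot.mk (DCRel i) (Sum.inl p))
              (fun x => Quot.mk (DCRel i) (Sum.inr (x, 0))))
    (by
      rintro p q (⟨a, b, rfl, rfl⟩ | ⟨a, rfl, rfl⟩)
      · exact Quot.sound (Or.inl ⟨a, b, rfl, rfl⟩)
      · exact Quot.sound (Or.inr (Or.inr ⟨a, rfl, rfl⟩)))

/-- The induced map `Cone(f, g) : Cone(i) → Cone(j)` of a commutative square
`f ∘ i = j ∘ g`. -/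
def coneMap {A X A' X' : Type*} (i : A → X) (j : A' → X') (g : A → A') (f : X → X')
    (hcomm : ∀ a, f (i a) = j (g a)) : MappingCone i → MappingCone j :=
  Quot.lift
    (Sum.elim (fun p => Quot.mk (MCRel j) (Sum.inl (g p.1, p.2)))
              (fun x => Quot.mk (MCRel j) (Sum.inr (f x))))
    (by
      rintro p q (⟨a, b, rfl, rfl⟩ | ⟨a, rfl, rfl⟩)
      · exact Quot.sound (Or.inl ⟨g a, g b, rfl, rfl⟩)
      · simp only [Sum.elim_inl, Sum.elim_inr, hcomm a]
        exact Quot.sound (Or.inr ⟨g a, rfl, rfl⟩))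

/-- Given a commutative square `f ∘ i = j ∘ g` of continuous maps and a
continuous map `t : X → A'` with `j ∘ t` homotopic to `f`, the induced map of mapping
cones `Cone(f, g) : Cone(i) → Cone(j)` factors through the double cone: there is a
continuous `h : CA ∪_i CX → Cone(j)` with `h ∘ p = Cone(f, g)`. -/
theorem coneMap_factors_through_doubleCone
    {A X A' X' : Type*} [TopologicalSpace A] [TopologicalSpace X]
    [TopologicalSpace A'] [TopologicalSpace X']
    (i : A → X) (j : A' → X') (g : A → A') (f : X → X')
    (hi : Continuous i) (hj : Continuous j) (hg : Continuous g) (hf : Continuous f)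
    (hcomm : ∀ a, f (i a) = j (g a))
    (t : X → A') (ht : Continuous t)
    (H : X × unitInterval → X') (hH : Continuous H)
    (hH0 : ∀ x, H (x, 0) = f x) (hH1 : ∀ x, H (x, 1) = j (t x)) :
    ∃ h : DoubleCone i → MappingCone j, Continuous h ∧
      ∀ z : MappingCone i, h (conePush i z) = coneMap i j g f hcomm z := by
  classical
  set σ : ℝ → unitInterval := Set.projIcc (0:ℝ) 1 zero_le_one with hσ
  have hσ0 : σ 0 = 0 := by simp [hσ, Set.projIcc]
  have hσ1 : σ 1 = 1 := by simp [hσ, Set.projIcc]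
  have hσc : Continuous σ := continuous_projIcc
  -- the map on the cone on `X`
  set cX : X × unitInterval → MappingCone j := fun p =>
    if ((p.2 : ℝ)) ≤ 1/2 then Quot.mk (MCRel j) (Sum.inr (H (p.1, σ (2 * p.2))))
    else Quot.mk (MCRel j) (Sum.inl (t p.1, σ (2 * (p.2 : ℝ) - 1))) with hcX
  have hcXcont : Continuous cX := by
    apply Continuous.if_le
    · exact continuous_quot_mk.comp <| continuous_inr.comp <| hH.comp <|
        continuous_fst.prodMk <| hσc.comp <| (continuous_const.mul
          (continuous_subtype_val.comp continuous_snd))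
    · exact continuous_quot_mk.comp <| continuous_inl.comp <|
        (ht.comp continuous_fst).prodMk <| hσc.comp <|
          ((continuous_const.mul (continuous_subtype_val.comp continuous_snd)).sub
            continuous_const)
    · exact continuous_subtype_val.comp continuous_snd
    · exact continuous_const
    · intro p hp
      have h2 : 2 * (p.2 : ℝ) = 1 := by rw [hp]; ring
      have h2' : 2 * (p.2 : ℝ) - 1 = 0 := by rw [hp]; ring
      have hcoe : σ (2 * (p.2 : ℝ)) = σ ((2 : ℝ) * p.2) := rfl
      rw [h2, hσ1, hH1]
      have h11 : (1:ℝ) - 1 = 0 := by norm_num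
      rw [h11, hσ0]
      exact Eq.symm (Quot.sound (Or.inr ⟨t p.1, rfl, rfl⟩) :
        Quot.mk (MCRel j) (Sum.inl (t p.1, 0)) = Quot.mk (MCRel j) (Sum.inr (j (t p.1))))
  have hcX1 : ∀ x : X, cX (x, 1) = Quot.mk (MCRel j) (Sum.inl (t x, 1)) := by
    intro x
    have : ¬ (((1 : unitInterval) : ℝ) ≤ 1/2) := by norm_num
    simp only [hcX, this, if_false]
    norm_num [hσ1]
  have hcX0 : ∀ x : X, cX (x, 0) = Quot.mk (MCRel j) (Sum.inr (f x)) := by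
    intro x
    have : (((0 : unitInterval) : ℝ) ≤ 1/2) := by norm_num
    simp only [hcX, this, if_true]
    norm_num [hσ0, hH0]
  refine ⟨Quot.lift
    (Sum.elim (fun p => Quot.mk (MCRel j) (Sum.inl (g p.1, p.2))) cX) ?_, ?_, ?_⟩
  · rintro p q (⟨a, b, rfl, rfl⟩ | ⟨x, y, rfl, rfl⟩ | ⟨a, rfl, rfl⟩)
    · exact Quot.sound (Or.inl ⟨g a, g b, rfl, rfl⟩)
    · simp only [Sum.elim_inr, hcX1]
      exact Quot.sound (Or.inl ⟨t x, t y, rfl, rfl⟩)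
    · simp only [Sum.elim_inl, Sum.elim_inr, hcX0, hcomm a]
      exact Quot.sound (Or.inr ⟨g a, rfl, rfl⟩)
  · exact continuous_quot_lift _ <| Continuous.sumElim
      (continuous_quot_mk.comp <| continuous_inl.comp <|
        (hg.comp continuous_fst).prodMk continuous_snd) hcXcont
  · intro z
    induction z using Quot.ind with
    | _ p =>
      cases p with
      | inl p => rfl
      | inr x => exact hcX0 x
end

section
/- Let i : A → X be a continuous map between topological spaces, and let C_{1/2}X ⊆ CA ∪_i CX denote the image of X × [0,1/2] under the quotient map defining the double cone. Then the quotient space (CA ∪_i CX)/C_{1/2}X, obtained by collapsing C_{1/2}X to a single point, is homeomorphic to the wedge ΣA ∨ ΣX, namely the space obtained from the disjoint union ΣA ⊔ ΣX of the unreduced suspensions by identifying the pole [A × {0}] of ΣA with the pole [X × {0}] of ΣX. -/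
/-- The subset `C_{1/2}X ⊆ CA ∪_i CX`: the image of `X × [0, 1/2]` under the quotient
map defining the double cone. -/
def halfCX {A X : Type*} (i : A → X) : Set (DoubleCone i) :=
  {z | ∃ (x : X) (s : unitInterval), (s : ℝ) ≤ 1 / 2 ∧
    z = Quot.mk (DCRel i) (Sum.inr (x, s))}

/-- The quotient `(CA ∪_i CX)/C_{1/2}X`, collapsing `C_{1/2}X` to a single point. -/
abbrev CollapsedDoubleCone {A X : Type*} (i : A → X) :=
  Quot (fun u v : DoubleCone i => u ∈ halfCX i ∧ v ∈ halfCX i)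

/-- The relation defining the unreduced suspension `ΣA`: `A × {0}` is collapsed to one
pole and `A × {1}` to another. -/
def SuspRel (A : Type*) (p q : A × unitInterval) : Prop :=
  (p.2 = 0 ∧ q.2 = 0) ∨ (p.2 = 1 ∧ q.2 = 1)

/-- The unreduced suspension `ΣA` of a space `A`. -/
abbrev Susp (A : Type*) := Quot (SuspRel A)

/-- The wedge `ΣA ∨ ΣX`: the disjoint union `ΣA ⊔ ΣX` with the pole `[A × {0}]` of `ΣA`
identified with the pole `[X × {0}]` of `ΣX`. -/
abbrev SuspWedge (A X : Type*) :=
  Quot (fun u v : Susp A ⊕ Susp X =>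
    ∃ (a : A) (x : X), u = Sum.inl (Quot.mk (SuspRel A) (a, 0)) ∧
      v = Sum.inr (Quot.mk (SuspRel X) (x, 0)))

/- ========== auxiliary ========== -/

noncomputable def sigFun : unitInterval → unitInterval := fun s =>
  ⟨max 0 (2 * (s : ℝ) - 1), le_max_left _ _, by
    have h1 := s.2.1; have h2 := s.2.2
    simp only [max_le_iff]
    constructor <;> norm_num <;> linarith⟩

lemma sigFun_cont : Continuous sigFun := by
  apply Continuous.subtype_mk
  fun_prop

lemma sigFun_of_le {s : unitInterval} (h : (s : ℝ) ≤ 1 / 2) : sigFun s = 0 := by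
  apply Subtype.ext
  show max 0 (2 * (s : ℝ) - 1) = ((0 : unitInterval) : ℝ)
  rw [max_eq_left (by linarith)]
  norm_num

lemma sigFun_one : sigFun 1 = 1 := by
  apply Subtype.ext
  show max 0 (2 * ((1 : unitInterval) : ℝ) - 1) = ((1 : unitInterval) : ℝ)
  norm_num

noncomputable def tauFun : unitInterval → unitInterval := fun u =>
  ⟨((u : ℝ) + 1) / 2, by constructor <;> [linarith [u.2.1]; linarith [u.2.2]]⟩

lemma tauFun_cont : Continuous tauFun := by
  apply Continuous.subtype_mk
  fun_prop

lemma tauFun_le {u : unitInterval} (h : u = 0) : (tauFun u : ℝ) ≤ 1 / 2 := by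
  subst h; simp [tauFun]

lemma tauFun_one : tauFun 1 = 1 := by
  apply Subtype.ext
  show (((1 : unitInterval) : ℝ) + 1) / 2 = ((1 : unitInterval) : ℝ)
  norm_num

section maps
variable {A X : Type*} (i : A → X)

noncomputable def fwdBase : (A × unitInterval) ⊕ (X × unitInterval) → SuspWedge A X :=
  Sum.elim
    (fun p => Quot.mk _ (Sum.inl (Quot.mk (SuspRel A) p)))
    (fun p => Quot.mk _ (Sum.inr (Quot.mk (SuspRel X) (p.1, sigFun p.2))))

lemma fwdBase_rel : ∀ p q, DCRel i p q → fwdBase (A := A) (X := X) p = fwdBase q := by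
  rintro p q (⟨a, b, rfl, rfl⟩ | ⟨x, y, rfl, rfl⟩ | ⟨a, rfl, rfl⟩)
  · simp only [fwdBase, Sum.elim_inl]
    exact congrArg _ (congrArg _ (Quot.sound (Or.inr ⟨rfl, rfl⟩)))
  · simp only [fwdBase, Sum.elim_inr]
    exact congrArg _ (congrArg _ (Quot.sound (Or.inr ⟨by simp [sigFun_one], by simp [sigFun_one]⟩)))
  · -- inl (a,0) vs inr (i a, 0)
    have h0 : sigFun (0 : unitInterval) = 0 := sigFun_of_le (by norm_num)
    simp only [fwdBase, Sum.elim_inl, Sum.elim_inr, h0]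
    exact Quot.sound ⟨a, i a, rfl, rfl⟩

noncomputable def fwd1 : DoubleCone i → SuspWedge A X :=
  Quot.lift (fwdBase) (fwdBase_rel i)

lemma fwd1_half {z : DoubleCone i} (hz : z ∈ halfCX i) :
    ∃ x : X, fwd1 i z = Quot.mk _ (Sum.inr (Quot.mk (SuspRel X) (x, 0))) := by
  obtain ⟨x, s, hs, rfl⟩ := hz
  exact ⟨x, by simp [fwd1, fwdBase, sigFun_of_le hs]⟩

noncomputable def fwd : CollapsedDoubleCone i → SuspWedge A X :=
  Quot.lift (fwd1 i) (by
    rintro u v ⟨hu, hv⟩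
    obtain ⟨x, hx⟩ := fwd1_half i hu
    obtain ⟨y, hy⟩ := fwd1_half i hv
    rw [hx, hy]
    exact congrArg _ (congrArg _ (Quot.sound (Or.inl ⟨rfl, rfl⟩))))

noncomputable def bwdBase : (Susp A) ⊕ (Susp X) → CollapsedDoubleCone i :=
  Sum.elim
    (Quot.lift (fun p => Quot.mk _ (Quot.mk (DCRel i) (Sum.inl p))) (by
      rintro ⟨a, t⟩ ⟨b, t'⟩ (⟨h1, h2⟩ | ⟨h1, h2⟩) <;> simp only at h1 h2 <;> subst h1 <;> subst h2
      · -- both at 0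
        have e1 : Quot.mk (DCRel i) (Sum.inl (a, 0)) = Quot.mk (DCRel i) (Sum.inr (i a, 0)) :=
          Quot.sound (Or.inr (Or.inr ⟨a, rfl, rfl⟩))
        have e2 : Quot.mk (DCRel i) (Sum.inl (b, 0)) = Quot.mk (DCRel i) (Sum.inr (i b, 0)) :=
          Quot.sound (Or.inr (Or.inr ⟨b, rfl, rfl⟩))
        rw [e1, e2]
        exact Quot.sound ⟨⟨i a, 0, by norm_num, rfl⟩, ⟨i b, 0, by norm_num, rfl⟩⟩
      · exact congrArg _ (Quot.sound (Or.inl ⟨a, b, rfl, rfl⟩))))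
    (Quot.lift (fun p => Quot.mk _ (Quot.mk (DCRel i) (Sum.inr (p.1, tauFun p.2)))) (by
      rintro ⟨x, t⟩ ⟨y, t'⟩ (⟨h1, h2⟩ | ⟨h1, h2⟩) <;> simp only at h1 h2 <;> subst h1 <;> subst h2 <;>
        simp only
      · exact Quot.sound ⟨⟨x, tauFun 0, tauFun_le rfl, rfl⟩, ⟨y, tauFun 0, tauFun_le rfl, rfl⟩⟩
      · rw [tauFun_one]
        exact congrArg _ (Quot.sound (Or.inr (Or.inl ⟨x, y, rfl, rfl⟩)))))

noncomputable def bwd : SuspWedge A X → CollapsedDoubleCone i :=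
  Quot.lift (bwdBase i) (by
    rintro u v ⟨a, x, rfl, rfl⟩
    simp only [bwdBase, Sum.elim_inl, Sum.elim_inr]
    have e1 : Quot.mk (DCRel i) (Sum.inl (a, 0)) = Quot.mk (DCRel i) (Sum.inr (i a, 0)) :=
      Quot.sound (Or.inr (Or.inr ⟨a, rfl, rfl⟩))
    rw [e1]
    exact Quot.sound ⟨⟨i a, 0, by norm_num, rfl⟩, ⟨x, tauFun 0, tauFun_le rfl, rfl⟩⟩)

lemma bwd_fwd : ∀ z : CollapsedDoubleCone i, bwd i (fwd i z) = z := by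
  apply Quot.ind; apply Quot.ind
  rintro (⟨a, t⟩ | ⟨x, s⟩)
  · rfl
  · by_cases h : (s : ℝ) ≤ 1 / 2
    · show Quot.mk _ (Quot.mk _ (Sum.inr (x, tauFun (sigFun s)))) = _
      rw [sigFun_of_le h]
      exact Quot.sound ⟨⟨x, tauFun 0, tauFun_le rfl, rfl⟩, ⟨x, s, h, rfl⟩⟩
    · show Quot.mk _ (Quot.mk _ (Sum.inr (x, tauFun (sigFun s)))) = _
      have : tauFun (sigFun s) = s := by
        apply Subtype.ext
        simp only [tauFun, sigFun]
        rw [max_eq_right (by linarith [not_le.mp h])]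
        ring
      rw [this]

lemma fwd_bwd : ∀ w : SuspWedge A X, fwd i (bwd i w) = w := by
  apply Quot.ind
  rintro (u | u)
  · induction u using Quot.ind with
    | _ p => rfl
  · induction u using Quot.ind with
    | _ p =>
      obtain ⟨y, t⟩ := p
      show Quot.mk _ (Sum.inr (Quot.mk _ (y, sigFun (tauFun t)))) = _
      have h : sigFun (tauFun t) = t := by
        apply Subtype.ext
        simp only [sigFun, tauFun]
        rw [show 2 * (((t : ℝ) + 1) / 2) - 1 = (t : ℝ) by ring]
        exact max_eq_right t.2.1
      rw [h]

variable [TopologicalSpace A] [TopologicalSpace X]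

lemma fwd_cont : Continuous (fwd i) := by
  apply continuous_quot_lift
  apply continuous_quot_lift
  apply Continuous.sumElim
  · exact continuous_quot_mk.comp (continuous_inl.comp (continuous_quot_mk))
  · exact continuous_quot_mk.comp (continuous_inr.comp (continuous_quot_mk.comp
      (continuous_fst.prodMk (sigFun_cont.comp continuous_snd))))

lemma bwd_cont : Continuous (bwd i) := by
  apply continuous_quot_lift
  apply Continuous.sumElim
  · apply continuous_quot_lift
    exact continuous_quot_mk.comp (continuous_quot_mk.comp continuous_inl)
  · apply continuous_quot_lift
    exact continuous_quot_mk.comp (continuous_quot_mk.comp (continuous_inr.comp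
      (continuous_fst.prodMk (tauFun_cont.comp continuous_snd))))

end maps


/-- For a continuous map `i : A → X`, the quotient of the double cone
`CA ∪_i CX` obtained by collapsing `C_{1/2}X` (the image of `X × [0, 1/2]`) to a single
point is homeomorphic to the wedge `ΣA ∨ ΣX` of the unreduced suspensions. -/
theorem collapsedDoubleCone_homeomorph_suspWedge
    {A X : Type*} [TopologicalSpace A] [TopologicalSpace X]
    (i : A → X) (hi : Continuous i) :
    Nonempty (CollapsedDoubleCone i ≃ₜ SuspWedge A X) := by
  exact ⟨⟨⟨fwd i, bwd i, bwd_fwd i, fwd_bwd i⟩, fwd_cont i, bwd_cont i⟩⟩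
end
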